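/- arXiv:0704.0054 — 2 statements merged into one kernel-verified Lean document; each statement's English description precedes it below -/
import Mathlib

section
/- Let n ≥ 1, 0 < p < ∞, 0 < q ≤ ∞, and let (μ_k)_{k∈ℤ} be a nonnegative sequence with (2^k μ_k)_{k∈ℤ} ∈ ℓ^q(ℤ). Let φ : ℝⁿ → [0,∞) be measurable and suppose there exist ε ∈ (0,1) and c > 0 such that for every integer k₀ there are nonnegative measurable functions ψ_{k₀} and η_{k₀} with φ ≤ ψ_{k₀} + η_{k₀} pointwise, ‖ψ_{k₀}‖_{L^∞} ≤ c·2^{k₀}, and 2^{k₀ ε p} · m(η_{k₀}, 2^{k₀}) ≤ c · Σ_{k ≥ k₀} (2^{kε} μ_k)^p. Then φ ∈ L^{p,q}, and there is a constant C, depending only on n, p, q, c, ε, such that ‖φ‖_{p,q} ≤ C · ‖(2^k μ_k)_k‖_{ℓ^q(ℤ)}. -/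
open MeasureTheory ENNReal Set

noncomputable section

abbrev Euc (n : ℕ) := EuclideanSpace ℝ (Fin n)

/-- Distribution function `m(F, lam) = |{x : lam < F x}|` (Lebesgue measure). -/
def distFn {n : ℕ} (F : Euc n → ℝ≥0∞) (lam : ℝ≥0∞) : ℝ≥0∞ :=
  volume {x | lam < F x}

/-- View a real-valued function as an `ℝ≥0∞`-valued one via its absolute value. -/
def eF {n : ℕ} (g : Euc n → ℝ) : Euc n → ℝ≥0∞ :=
  fun x => ENNReal.ofReal |g x|

/-- Dyadic Lorentz `L^{p,q}` quasinorm. -/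
def lorentzNorm {n : ℕ} (p : ℝ) (q : ℝ≥0∞) (F : Euc n → ℝ≥0∞) : ℝ≥0∞ :=
  if q = ∞ then ⨆ k : ℤ, (2 : ℝ≥0∞) ^ k * (distFn F ((2 : ℝ≥0∞) ^ k)) ^ (1/p)
  else (∑' k : ℤ, ((2 : ℝ≥0∞) ^ k * (distFn F ((2 : ℝ≥0∞) ^ k)) ^ (1/p)) ^ q.toReal) ^ (1/q.toReal)

/-- `ℓ^q(ℤ)` norm of a nonnegative sequence. -/
def ellq (q : ℝ≥0∞) (a : ℤ → ℝ≥0∞) : ℝ≥0∞ :=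
  if q = ∞ then ⨆ k : ℤ, a k else (∑' k : ℤ, (a k) ^ q.toReal) ^ (1/q.toReal)

/-- The axis-parallel closed cube centered at `c` with half side-length `r`. -/
def cube {n : ℕ} (c : Euc n) (r : ℝ) : Set (Euc n) := {y | ∀ i, |y i - c i| ≤ r}

/-- `H^p` atom with defining cube `cube c r`; `|cube c r| = (2r)^n`. -/
def IsHpAtom {n : ℕ} (p : ℝ) (a : Euc n → ℝ) (c : Euc n) (r : ℝ) : Prop :=
  0 < r ∧ Measurable a ∧ (∀ x, x ∉ cube c r → a x = 0) ∧
    (∀ᵐ x ∂(volume : Measure (Euc n)), |a x| ≤ ((((2*r)^n : ℝ)) ^ (1/p))⁻¹) ∧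
    ∀ α : Fin n → ℕ, (∑ i, α i) ≤ ⌊(n : ℝ) * (1/p - 1)⌋₊ →
      (∫ y : Euc n, (∏ i, y i ^ α i) * a y) = 0

/-- `(f * ψ_t)(y)` where `ψ_t(x) = t⁻ⁿ ψ(x/t)`. -/
def convAt {n : ℕ} (ψ f : Euc n → ℝ) (t : ℝ) (y : Euc n) : ℝ :=
  ∫ z : Euc n, f z * ((t ^ n)⁻¹ * ψ (t⁻¹ • (y - z)))

/-- Non-tangential maximal function. -/
def ntMax {n : ℕ} (ψ f : Euc n → ℝ) (x : Euc n) : ℝ≥0∞ :=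
  ⨆ (y : Euc n) (t : ℝ) (_ : 0 < t) (_ : dist x y < t), ENNReal.ofReal |convAt ψ f t y|

/-- Radial maximal function. -/
def radMax {n : ℕ} (φ f : Euc n → ℝ) (x : Euc n) : ℝ≥0∞ :=
  ⨆ (t : ℝ) (_ : 0 < t), ENNReal.ofReal |convAt φ f t x|

/-!
Write `a k = 2 ^ k * μ k` and pick `M` with `c + 1 ≤ 2 ^ M`. The decomposition at level `k₀`
puts `{φ > 2 ^ (k₀ + M)}` inside `{ψ > c 2 ^ k₀} ∪ {η > 2 ^ k₀}`, the first set being null, so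
`2 ^ (k₀ p) m(φ, 2 ^ (k₀ + M)) ≤ c ∑_{m ≥ 0} (2 ^ ((ε - 1) m) a (k₀ + m)) ^ p`.
Splitting the weight as `u ^ m * u ^ m` with `u = 2 ^ ((ε - 1) / 2) < 1` bounds the right side by
`c (1 - u ^ p)⁻¹ W k₀ ^ p`, where `W k = ⨆ m, u ^ m * a (k + m)`. Hence the `j`-th term of the
Lorentz quasinorm is at most a constant times `W (j - M)`, and `W` is controlled by `a` in `ℓ^q`:
for `q = ∞` because `u ≤ 1`, and for `q < ∞` because `W k ^ q ≤ ∑ m, u ^ (m q) a (k + m) ^ q`.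
-/

lemma ENNReal.pow_rpow_comm (x : ℝ≥0∞) (m : ℕ) (r : ℝ) : (x ^ m) ^ r = (x ^ r) ^ m := by
  rw [← ENNReal.rpow_natCast, ← ENNReal.rpow_mul, mul_comm, ENNReal.rpow_mul, ENNReal.rpow_natCast]

lemma ellq_mono {q : ℝ≥0∞} {a b : ℤ → ℝ≥0∞} (h : ∀ k, a k ≤ b k) : ellq q a ≤ ellq q b := by
  unfold ellq
  split_ifs
  · exact iSup_mono h
  · gcongr with k
    exact h k

lemma ellq_const_mul {q : ℝ≥0∞} (hq : 0 < q) (C : ℝ≥0∞) (a : ℤ → ℝ≥0∞) :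
    ellq q (fun k => C * a k) = C * ellq q a := by
  unfold ellq
  split_ifs with hqt
  · exact (ENNReal.mul_iSup C a).symm
  · have hr : 0 < q.toReal := ENNReal.toReal_pos hq.ne' hqt
    simp_rw [ENNReal.mul_rpow_of_nonneg _ _ hr.le, ENNReal.tsum_mul_left,
      ENNReal.mul_rpow_of_nonneg _ _ (one_div_pos.2 hr).le, ← ENNReal.rpow_mul,
      mul_one_div_cancel hr.ne', ENNReal.rpow_one]

lemma ellq_comp_sub (q : ℝ≥0∞) (a : ℤ → ℝ≥0∞) (M : ℤ) :
    ellq q (fun k => a (k - M)) = ellq q a := by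
  unfold ellq
  split_ifs
  · exact Equiv.iSup_comp (Equiv.subRight M)
  · exact congrArg (· ^ _) ((Equiv.subRight M).tsum_eq fun k => a k ^ q.toReal)

lemma lorentzNorm_eq_ellq {n : ℕ} (p : ℝ) (q : ℝ≥0∞) (F : Euc n → ℝ≥0∞) :
    lorentzNorm p q F = ellq q (fun k => 2 ^ k * distFn F (2 ^ k) ^ (1 / p)) := rfl

lemma iSup_rpow_le_tsum_rpow {ι : Type*} {r : ℝ} (hr : 0 < r) (x : ι → ℝ≥0∞) :
    (⨆ i, x i) ^ r ≤ ∑' i, x i ^ r := by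
  rw [← ENNReal.le_rpow_inv_iff hr]
  exact iSup_le fun i => (ENNReal.le_rpow_inv_iff hr).2 (ENNReal.le_tsum i)

lemma tsum_rpow_geometric_sq_mul_le (u : ℝ≥0∞) {p : ℝ} (hp : 0 ≤ p) (x : ℕ → ℝ≥0∞) :
    ∑' m, ((u ^ 2) ^ m * x m) ^ p ≤ (1 - u ^ p)⁻¹ * (⨆ m, u ^ m * x m) ^ p := by
  calc ∑' m, ((u ^ 2) ^ m * x m) ^ p = ∑' m, (u ^ p) ^ m * (u ^ m * x m) ^ p := by
        refine tsum_congr fun m => ?_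
        rw [← pow_mul, mul_comm 2, pow_mul, sq, mul_assoc, ENNReal.mul_rpow_of_nonneg _ _ hp,
          ENNReal.pow_rpow_comm]
    _ ≤ ∑' m, (u ^ p) ^ m * (⨆ m, u ^ m * x m) ^ p := by
        gcongr with m
        exact le_iSup (fun m => u ^ m * x m) m
    _ = (1 - u ^ p)⁻¹ * (⨆ m, u ^ m * x m) ^ p := by
        rw [ENNReal.tsum_mul_right, ENNReal.tsum_geometric]

lemma exists_ellq_iSup_geometric_shift_le {u : ℝ≥0∞} (hu : u < 1) {q : ℝ≥0∞} (hq : 0 < q) :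
    ∃ K : ℝ≥0∞, K ≠ ∞ ∧ ∀ a : ℤ → ℝ≥0∞,
      ellq q (fun k => ⨆ m : ℕ, u ^ m * a (k + m)) ≤ K * ellq q a := by
  rcases eq_or_ne q ∞ with rfl | hqt
  · refine ⟨1, ENNReal.one_ne_top, fun a => ?_⟩
    simp only [ellq, if_pos, one_mul]
    refine iSup_le fun k => iSup_le fun m => ?_
    exact (mul_le_of_le_one_left zero_le (pow_le_one₀ zero_le hu.le)).trans (le_iSup a _)
  have hr : 0 < q.toReal := ENNReal.toReal_pos hq.ne' hqt
  have hur : u ^ q.toReal < 1 := ENNReal.rpow_lt_one hu hr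
  have hK : (1 - u ^ q.toReal)⁻¹ ≠ ∞ := ENNReal.inv_ne_top.2 (tsub_pos_of_lt hur).ne'
  refine ⟨(1 - u ^ q.toReal)⁻¹ ^ (1 / q.toReal),
    ENNReal.rpow_ne_top_of_nonneg (by positivity) hK, fun a => ?_⟩
  simp only [ellq, if_neg hqt]
  rw [← ENNReal.mul_rpow_of_nonneg _ _ (by positivity)]
  gcongr
  calc ∑' k, (⨆ m : ℕ, u ^ m * a (k + m)) ^ q.toReal
      ≤ ∑' k, ∑' m : ℕ, (u ^ q.toReal) ^ m * a (k + m) ^ q.toReal := by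
        gcongr with k
        refine (iSup_rpow_le_tsum_rpow hr _).trans_eq (tsum_congr fun m => ?_)
        rw [ENNReal.mul_rpow_of_nonneg _ _ hr.le, ENNReal.pow_rpow_comm]
    _ = ∑' m : ℕ, (u ^ q.toReal) ^ m * ∑' k, a (k + m) ^ q.toReal := by
        rw [ENNReal.tsum_comm]
        simp_rw [ENNReal.tsum_mul_left]
    _ = (1 - u ^ q.toReal)⁻¹ * ∑' k, a k ^ q.toReal := by
        have hshift (m : ℕ) : ∑' k, a (k + m) ^ q.toReal = ∑' k, a k ^ q.toReal :=
          (Equiv.addRight (m : ℤ)).tsum_eq fun k => a k ^ q.toReal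
        simp only [hshift, ENNReal.tsum_mul_right, ENNReal.tsum_geometric]

lemma distFn_anti {n : ℕ} (F : Euc n → ℝ≥0∞) {s t : ℝ≥0∞} (h : s ≤ t) :
    distFn F t ≤ distFn F s :=
  measure_mono fun _ hx => h.trans_lt hx

lemma distFn_eF_le_of_le_add {n : ℕ} {φ ψ η : Euc n → ℝ} (hφ0 : ∀ x, 0 ≤ φ x)
    (hφ : ∀ x, φ x ≤ ψ x + η x) {s t : ℝ} (ht : 0 ≤ t) (hψ : ∀ᵐ x, ψ x ≤ s) :
    distFn (eF φ) (ENNReal.ofReal (s + t)) ≤ distFn (eF η) (ENNReal.ofReal t) := by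
  refine measure_mono_ae ?_
  filter_upwards [hψ] with x hψx (hx : ENNReal.ofReal (s + t) < ENNReal.ofReal |φ x|)
  show ENNReal.ofReal t < ENNReal.ofReal |η x|
  rw [abs_of_nonneg (hφ0 x)] at hx
  have hst := (ENNReal.ofReal_lt_ofReal_iff'.1 hx).1
  have hηx : t < |η x| := by linarith [le_abs_self (η x), hφ x]
  exact ENNReal.ofReal_lt_ofReal_iff'.2 ⟨hηx, ht.trans_lt hηx⟩

lemma ofReal_two_rpow (x : ℝ) : ENNReal.ofReal ((2 : ℝ) ^ x) = (2 : ℝ≥0∞) ^ x := by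
  rw [← ENNReal.ofReal_rpow_of_pos two_pos, ENNReal.ofReal_ofNat]

lemma ofReal_two_zpow (k : ℤ) : ENNReal.ofReal ((2 : ℝ) ^ k) = (2 : ℝ≥0∞) ^ k := by
  rw [← Real.rpow_intCast, ofReal_two_rpow, ENNReal.rpow_intCast]

lemma two_rpow_add (x y : ℝ) : (2 : ℝ≥0∞) ^ (x + y) = 2 ^ x * 2 ^ y :=
  ENNReal.rpow_add x y two_ne_zero ENNReal.ofNat_ne_top

lemma tsum_Ici_ofReal_two_rpow_mul_rpow_eq {ε p : ℝ} (hp : 0 ≤ p) {μ : ℤ → ℝ}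
    (hμ : ∀ k, 0 ≤ μ k) (k₀ : ℤ) :
    ∑' k : {k : ℤ // k₀ ≤ k}, ENNReal.ofReal (((2 : ℝ) ^ ((k : ℝ) * ε) * μ k) ^ p) =
      2 ^ (k₀ * (ε - 1) * p) *
        ∑' m : ℕ, ((2 ^ (ε - 1)) ^ m * ENNReal.ofReal (2 ^ (k₀ + m) * μ (k₀ + m))) ^ p := by
  let e : ℕ ≃ {k : ℤ // k₀ ≤ k} :=
    { toFun m := ⟨k₀ + m, by omega⟩
      invFun k := (k.1 - k₀).toNat
      left_inv m := by simp
      right_inv k := Subtype.ext (by simp only; omega) }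
  rw [← e.tsum_eq, ← ENNReal.tsum_mul_left]
  refine tsum_congr fun m => ?_
  have hsplit : (2 : ℝ) ^ (((k₀ + m : ℤ) : ℝ) * ε) * μ (k₀ + m) =
      2 ^ (((k₀ + m : ℤ) : ℝ) * (ε - 1)) * (2 ^ (k₀ + m) * μ (k₀ + m)) := by
    rw [← mul_assoc, ← Real.rpow_intCast, ← Real.rpow_add two_pos]
    ring_nf
  have hweight : (2 : ℝ≥0∞) ^ (((k₀ + m : ℤ) : ℝ) * (ε - 1)) =
      2 ^ (k₀ * (ε - 1)) * (2 ^ (ε - 1)) ^ m := by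
    rw [← ENNReal.rpow_natCast, ← ENNReal.rpow_mul, ← two_rpow_add]
    push_cast
    ring_nf
  simp only [e, Equiv.coe_fn_mk]
  rw [← ENNReal.ofReal_rpow_of_nonneg (by positivity [hμ (k₀ + m)]) hp, hsplit,
    ENNReal.ofReal_mul (by positivity), ofReal_two_rpow, hweight, mul_assoc,
    ENNReal.mul_rpow_of_nonneg _ _ hp, ← ENNReal.rpow_mul]

lemma distFn_eF_two_zpow_add_le {n : ℕ} {φ ψ η : Euc n → ℝ} (hφ0 : ∀ x, 0 ≤ φ x)
    (hφ : ∀ x, φ x ≤ ψ x + η x) {c : ℝ} {M : ℕ} (hM : c + 1 ≤ 2 ^ M) {k₀ : ℤ}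
    (hψ : ∀ᵐ x, ψ x ≤ c * 2 ^ k₀) :
    distFn (eF φ) (2 ^ (k₀ + M)) ≤ distFn (eF η) (2 ^ k₀) := by
  have h2k : (0 : ℝ) < 2 ^ k₀ := by positivity
  have hle : c * 2 ^ k₀ + 2 ^ k₀ ≤ (2 : ℝ) ^ (k₀ + M) := by
    rw [zpow_add₀ two_ne_zero, zpow_natCast]
    nlinarith
  calc distFn (eF φ) (2 ^ (k₀ + M))
      ≤ distFn (eF φ) (ENNReal.ofReal (c * 2 ^ k₀ + 2 ^ k₀)) := by
        refine distFn_anti _ ?_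
        rw [← ofReal_two_zpow]
        exact ENNReal.ofReal_le_ofReal hle
    _ ≤ distFn (eF η) (2 ^ k₀) := by
        rw [← ofReal_two_zpow]
        exact distFn_eF_le_of_le_add hφ0 hφ h2k.le hψ

lemma two_rpow_mul_distFn_le {n : ℕ} {p ε c : ℝ} (hp : 0 < p) {u : ℝ≥0∞}
    (hu : u ^ 2 = 2 ^ (ε - 1)) {μ : ℤ → ℝ} (hμ : ∀ k, 0 ≤ μ k) {η : Euc n → ℝ} {k₀ : ℤ}
    (hη : ENNReal.ofReal ((2 : ℝ) ^ ((k₀ : ℝ) * ε * p)) * distFn (eF η) (2 ^ k₀) ≤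
      ENNReal.ofReal c * ∑' k : {k : ℤ // k₀ ≤ k},
        ENNReal.ofReal (((2 : ℝ) ^ ((k : ℝ) * ε) * μ k) ^ p)) :
    2 ^ (k₀ * p) * distFn (eF η) (2 ^ k₀) ≤ ENNReal.ofReal c * (1 - u ^ p)⁻¹ *
      (⨆ m : ℕ, u ^ m * ENNReal.ofReal (2 ^ (k₀ + m) * μ (k₀ + m))) ^ p := by
  rw [tsum_Ici_ofReal_two_rpow_mul_rpow_eq hp.le hμ, ← hu, ofReal_two_rpow] at hη
  have hweight : (2 : ℝ≥0∞) ^ (k₀ * p) * 2 ^ (k₀ * (ε - 1) * p) = 2 ^ (k₀ * ε * p) := by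
    rw [← two_rpow_add]
    ring_nf
  set W := ⨆ m : ℕ, u ^ m * ENNReal.ofReal (2 ^ (k₀ + m) * μ (k₀ + m))
  refine (ENNReal.mul_le_mul_iff_right (a := 2 ^ ((k₀ : ℝ) * ε * p))
    (ENNReal.rpow_pos two_pos ENNReal.ofNat_ne_top).ne'
    (ENNReal.rpow_ne_top_of_nonneg' two_pos ENNReal.ofNat_ne_top)).1 ?_
  calc 2 ^ ((k₀ : ℝ) * ε * p) * (2 ^ (k₀ * p) * distFn (eF η) (2 ^ k₀))
      = 2 ^ (k₀ * p) * (2 ^ ((k₀ : ℝ) * ε * p) * distFn (eF η) (2 ^ k₀)) := by ring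
    _ ≤ 2 ^ (k₀ * p) * (ENNReal.ofReal c * (2 ^ (k₀ * (ε - 1) * p) *
          ∑' m : ℕ, ((u ^ 2) ^ m * ENNReal.ofReal (2 ^ (k₀ + m) * μ (k₀ + m))) ^ p)) := by
        gcongr
    _ = 2 ^ ((k₀ : ℝ) * ε * p) * (ENNReal.ofReal c *
          ∑' m : ℕ, ((u ^ 2) ^ m * ENNReal.ofReal (2 ^ (k₀ + m) * μ (k₀ + m))) ^ p) := by
        rw [← hweight]
        ring
    _ ≤ 2 ^ ((k₀ : ℝ) * ε * p) * (ENNReal.ofReal c * (1 - u ^ p)⁻¹ * W ^ p) := by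
        rw [mul_assoc (ENNReal.ofReal c)]
        gcongr
        exact tsum_rpow_geometric_sq_mul_le u hp.le _

lemma two_zpow_mul_distFn_rpow_le {n : ℕ} {p ε c : ℝ} (hp : 0 < p) {u : ℝ≥0∞}
    (hu : u ^ 2 = 2 ^ (ε - 1)) {M : ℕ} (hM : c + 1 ≤ 2 ^ M) {μ : ℤ → ℝ} (hμ : ∀ k, 0 ≤ μ k)
    {φ ψ η : Euc n → ℝ} (hφ0 : ∀ x, 0 ≤ φ x) (hφ : ∀ x, φ x ≤ ψ x + η x) {k₀ : ℤ}
    (hψ : ∀ᵐ x, ψ x ≤ c * 2 ^ k₀)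
    (hη : ENNReal.ofReal ((2 : ℝ) ^ ((k₀ : ℝ) * ε * p)) * distFn (eF η) (2 ^ k₀) ≤
      ENNReal.ofReal c * ∑' k : {k : ℤ // k₀ ≤ k},
        ENNReal.ofReal (((2 : ℝ) ^ ((k : ℝ) * ε) * μ k) ^ p)) :
    2 ^ (k₀ + M) * distFn (eF φ) (2 ^ (k₀ + M)) ^ (1 / p) ≤
      2 ^ M * (ENNReal.ofReal c * (1 - u ^ p)⁻¹) ^ (1 / p) *
        ⨆ m : ℕ, u ^ m * ENNReal.ofReal (2 ^ (k₀ + m) * μ (k₀ + m)) := by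
  have hroot (x : ℝ≥0∞) : (x ^ p) ^ (1 / p) = x := by
    rw [← ENNReal.rpow_mul, mul_one_div_cancel hp.ne', ENNReal.rpow_one]
  calc 2 ^ (k₀ + M) * distFn (eF φ) (2 ^ (k₀ + M)) ^ (1 / p)
      = 2 ^ M * (2 ^ (k₀ * p) * distFn (eF φ) (2 ^ (k₀ + M))) ^ (1 / p) := by
        rw [ENNReal.mul_rpow_of_nonneg _ _ (by positivity), ENNReal.rpow_mul, hroot,
          ENNReal.rpow_intCast, ENNReal.zpow_add two_ne_zero ENNReal.ofNat_ne_top, zpow_natCast]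
        ring
    _ ≤ 2 ^ M * (2 ^ (k₀ * p) * distFn (eF η) (2 ^ k₀)) ^ (1 / p) := by
        gcongr
        exact distFn_eF_two_zpow_add_le hφ0 hφ hM hψ
    _ ≤ 2 ^ M * (ENNReal.ofReal c * (1 - u ^ p)⁻¹ *
          (⨆ m : ℕ, u ^ m * ENNReal.ofReal (2 ^ (k₀ + m) * μ (k₀ + m))) ^ p) ^ (1 / p) := by
        gcongr 2 ^ M * ?_ ^ _
        exact two_rpow_mul_distFn_le hp hu hμ hη
    _ = _ := by rw [ENNReal.mul_rpow_of_nonneg _ _ (by positivity), hroot, mul_assoc]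

theorem stmt0_general (n : ℕ) (p : ℝ) (hp : 0 < p) (q : ℝ≥0∞) (hq : 0 < q)
    (ε c : ℝ) (hε1 : ε < 1) :
    ∃ C : ℝ, 0 < C ∧
      ∀ (μ : ℤ → ℝ) (φ : Euc n → ℝ),
        (∀ k, 0 ≤ μ k) →
        ellq q (fun k => ENNReal.ofReal ((2:ℝ) ^ k * μ k)) < ∞ →
        Measurable φ → (∀ x, 0 ≤ φ x) →
        (∀ k₀ : ℤ, ∃ ψ η : Euc n → ℝ, Measurable ψ ∧ Measurable η ∧
          (∀ x, 0 ≤ ψ x) ∧ (∀ x, 0 ≤ η x) ∧ (∀ x, φ x ≤ ψ x + η x) ∧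
          (∀ᵐ x ∂(volume : Measure (Euc n)), ψ x ≤ c * (2:ℝ) ^ k₀) ∧
          ENNReal.ofReal ((2:ℝ) ^ ((k₀ : ℝ) * ε * p)) * distFn (eF η) ((2 : ℝ≥0∞) ^ k₀) ≤
            ENNReal.ofReal c *
              ∑' k : {k : ℤ // k₀ ≤ k},
                ENNReal.ofReal (((2:ℝ) ^ (((k : ℤ) : ℝ) * ε) * μ (k : ℤ)) ^ p)) →
        lorentzNorm p q (eF φ) < ∞ ∧
          lorentzNorm p q (eF φ) ≤
            ENNReal.ofReal C * ellq q (fun k => ENNReal.ofReal ((2:ℝ) ^ k * μ k)) := by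
  set u : ℝ≥0∞ := 2 ^ ((ε - 1) / 2)
  have hu2 : u ^ 2 = 2 ^ (ε - 1) := by
    rw [← ENNReal.rpow_natCast, ← ENNReal.rpow_mul]
    norm_num
  have hu : u < 1 := ENNReal.rpow_lt_one_of_one_lt_of_neg one_lt_two (by linarith)
  obtain ⟨M, hM⟩ := pow_unbounded_of_one_lt (c + 1) one_lt_two
  obtain ⟨K, hK, hshift⟩ := exists_ellq_iSup_geometric_shift_le hu hq
  set B : ℝ≥0∞ := 2 ^ M * (ENNReal.ofReal c * (1 - u ^ p)⁻¹) ^ (1 / p)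
  have hB : B ≠ ∞ := by
    have : (1 - u ^ p)⁻¹ ≠ ∞ :=
      ENNReal.inv_ne_top.2 (tsub_pos_of_lt (ENNReal.rpow_lt_one hu hp)).ne'
    finiteness
  have hBK : B * K ≤ ENNReal.ofReal ((B * K).toReal + 1) :=
    (ENNReal.le_ofReal_iff_toReal_le (ENNReal.mul_ne_top hB hK) (by positivity)).2 (by linarith)
  refine ⟨(B * K).toReal + 1, by positivity, fun μ φ hμ hfin _ hφ0 hdec => ?_⟩
  set a : ℤ → ℝ≥0∞ := fun k => ENNReal.ofReal (2 ^ k * μ k)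
  set W : ℤ → ℝ≥0∞ := fun k => ⨆ m : ℕ, u ^ m * a (k + m)
  have hterm (j : ℤ) : 2 ^ j * distFn (eF φ) (2 ^ j) ^ (1 / p) ≤ B * W (j - M) := by
    obtain ⟨ψ, η, -, -, -, -, hφ, hψ, hη⟩ := hdec (j - M)
    have := two_zpow_mul_distFn_rpow_le hp hu2 hM.le hμ hφ0 hφ hψ hη
    rwa [sub_add_cancel] at this
  have hbound : lorentzNorm p q (eF φ) ≤ B * K * ellq q a :=
    calc lorentzNorm p q (eF φ) ≤ ellq q (fun j => B * W (j - M)) :=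
          (lorentzNorm_eq_ellq p q _).trans_le (ellq_mono hterm)
      _ = B * ellq q W := by rw [ellq_comp_sub q (fun j => B * W j), ellq_const_mul hq]
      _ ≤ B * K * ellq q a := by
        rw [mul_assoc B K]
        gcongr B * ?_
        exact hshift a
  exact ⟨hbound.trans_lt (ENNReal.mul_lt_top (ENNReal.mul_ne_top hB hK).lt_top hfin),
    hbound.trans (by gcongr)⟩

/-- Lemma 1.1. -/
theorem stmt0 (n : ℕ) (hn : 1 ≤ n) (p : ℝ) (hp : 0 < p) (q : ℝ≥0∞) (hq : 0 < q)
    (ε c : ℝ) (hε0 : 0 < ε) (hε1 : ε < 1) (hc : 0 < c) :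
    ∃ C : ℝ, 0 < C ∧
      ∀ (μ : ℤ → ℝ) (φ : Euc n → ℝ),
        (∀ k, 0 ≤ μ k) →
        ellq q (fun k => ENNReal.ofReal ((2:ℝ) ^ k * μ k)) < ∞ →
        Measurable φ → (∀ x, 0 ≤ φ x) →
        (∀ k₀ : ℤ, ∃ ψ η : Euc n → ℝ, Measurable ψ ∧ Measurable η ∧
          (∀ x, 0 ≤ ψ x) ∧ (∀ x, 0 ≤ η x) ∧ (∀ x, φ x ≤ ψ x + η x) ∧
          (∀ᵐ x ∂(volume : Measure (Euc n)), ψ x ≤ c * (2:ℝ) ^ k₀) ∧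
          ENNReal.ofReal ((2:ℝ) ^ ((k₀ : ℝ) * ε * p)) * distFn (eF η) ((2 : ℝ≥0∞) ^ k₀) ≤
            ENNReal.ofReal c *
              ∑' k : {k : ℤ // k₀ ≤ k},
                ENNReal.ofReal (((2:ℝ) ^ (((k : ℤ) : ℝ) * ε) * μ (k : ℤ)) ^ p)) →
        lorentzNorm p q (eF φ) < ∞ ∧
          lorentzNorm p q (eF φ) ≤
            ENNReal.ofReal C * ellq q (fun k => ENNReal.ofReal ((2:ℝ) ^ k * μ k)) :=
  stmt0_general n p hp q hq ε c hε1
end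
end

section
/- Let n ≥ 1, 0 < p ≤ 1, N = ⌊n(1/p−1)⌋, and let k(x,y) be a kernel on ℝⁿ×ℝⁿ (defined for x ≠ y) whose partial derivatives in y up to order N exist. Let a be an H^p atom with defining cube I centered at y_I, let 0 < δ ≤ 1, and suppose that for a.e. x ∉ (2/δ)I one has Ta(x) = ∫_I k(x,y) a(y) dy, with the integrand absolutely integrable. Then ∫_{ℝⁿ∖(2/δ)I} |Ta(x)|^p dx ≤ ω_p(δ). -/
open MeasureTheory ENNReal Set

noncomputable section

/-- Partial derivative in the `i`-th coordinate direction. -/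
def pderiv' {n : ℕ} (i : Fin n) (g : Euc n → ℝ) : Euc n → ℝ :=
  fun y => fderiv ℝ g y (EuclideanSpace.single i (1:ℝ))

/-- Iterated partial derivatives along a list of coordinate directions. -/
def pderivList {n : ℕ} : List (Fin n) → (Euc n → ℝ) → (Euc n → ℝ)
  | [], g => g
  | i :: L, g => pderiv' i (pderivList L g)

/-- The list of directions associated to a multi-index `α`. -/
def idxList {n : ℕ} (α : Fin n → ℕ) : List (Fin n) :=
  (List.ofFn fun i => List.replicate (α i) i).flatten

/-- The degree-`N` Taylor polynomial in `y`, centered at `yI`, of the kernel `k(x, ·)`: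
`Σ_{|α| ≤ N} (y - yI)^α k_α(x, yI)` with `k_α(x,yI) = (1/α!) D_y^α k(x,y)|_{y = yI}`. -/
def taylorPoly {n : ℕ} (N : ℕ) (k : Euc n → Euc n → ℝ) (x yI y : Euc n) : ℝ :=
  ∑ α : Fin n → Fin (N+1), if (∑ i, (α i : ℕ)) ≤ N then
    (∏ i, (y i - yI i) ^ (α i : ℕ)) *
      ((∏ i, (Nat.factorial (α i : ℕ) : ℝ))⁻¹ *
        pderivList (idxList fun i => (α i : ℕ)) (k x) yI)
  else 0

/-- The modulus of continuity `ω_p(δ)`, a supremum over all cubes `I = cube yI ρ`. -/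
def omegaP {n : ℕ} (N : ℕ) (p : ℝ) (k : Euc n → Euc n → ℝ) (δ : ℝ) : ℝ≥0∞ :=
  ⨆ (yI : Euc n) (ρ : ℝ) (_ : 0 < ρ),
    (volume (cube yI ρ))⁻¹ *
      ∫⁻ x in (cube yI ((2/δ) * ρ))ᶜ,
        (∫⁻ y in cube yI ρ, ENNReal.ofReal |k x y - taylorPoly N k x yI y|) ^ p

/-! The moments of an atom `a` vanish up to order `N`, so `a` annihilates every polynomial of
degree at most `N`, in particular the Taylor polynomial `P_x` of `k(x, ·)` at the centre of its
cube `I`. Hence `Ta(x) = ∫_I (k(x,y) - P_x(y)) a(y) dy`, and `|a| ≤ |I|^{-1/p}` gives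
`|Ta(x)|^p ≤ |I|⁻¹ (∫_I |k(x,y) - P_x(y)| dy)^p` off `(2/δ)I`. Integrating in `x` yields the
quantity whose supremum over all cubes is `ω_p(δ)`. -/

section Cube

variable {n : ℕ}

lemma cube_eq_preimage_pi (c : Euc n) (r : ℝ) :
    cube c r = WithLp.ofLp ⁻¹' univ.pi fun i => Icc (c i - r) (c i + r) := by
  ext y
  simp only [cube, mem_ofPred_eq, mem_preimage, mem_univ_pi, mem_Icc, abs_le]
  refine forall_congr' fun i => ?_
  constructor <;> rintro ⟨h₁, h₂⟩ <;> constructor <;> linarith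

lemma measurableSet_cube (c : Euc n) (r : ℝ) : MeasurableSet (cube c r) := by
  rw [cube_eq_preimage_pi]
  exact (PiLp.volume_preserving_ofLp _).measurable (.univ_pi fun _ => measurableSet_Icc)

lemma isCompact_cube (c : Euc n) (r : ℝ) : IsCompact (cube c r) := by
  rw [cube_eq_preimage_pi]
  exact (PiLp.homeomorph 2 _).isCompact_preimage.2 (isCompact_univ_pi fun _ => isCompact_Icc)

lemma volume_cube (c : Euc n) {r : ℝ} (hr : 0 ≤ r) :
    volume (cube c r) = ENNReal.ofReal ((2 * r) ^ n) := by
  rw [cube_eq_preimage_pi, (PiLp.volume_preserving_ofLp _).measure_preimage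
    (MeasurableSet.univ_pi fun _ => measurableSet_Icc).nullMeasurableSet, volume_pi_pi]
  simp only [Real.volume_Icc, show ∀ i, c i + r - (c i - r) = 2 * r from fun _ => by ring,
    Finset.prod_const, Finset.card_univ, Fintype.card_fin]
  rw [ENNReal.ofReal_pow (by linarith)]

lemma volume_cube_ne_zero (c : Euc n) {r : ℝ} (hr : 0 < r) : volume (cube c r) ≠ 0 := by
  rw [volume_cube c hr.le]
  exact (ENNReal.ofReal_pos.2 (by positivity)).ne'

end Cube

open MvPolynomial in
lemma totalDegree_prod_X_sub_C_pow_le {n : ℕ} (c : Fin n → ℝ) (α : Fin n → ℕ) :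
    (∏ i, (X i - C (c i)) ^ α i : MvPolynomial (Fin n) ℝ).totalDegree ≤ ∑ i, α i := by
  refine (totalDegree_finsetProd _ _).trans (Finset.sum_le_sum fun i _ => ?_)
  calc ((X i - C (c i)) ^ α i).totalDegree ≤ α i * (X i - C (c i)).totalDegree :=
        totalDegree_pow _ _
    _ ≤ α i * 1 := by
        gcongr
        exact (totalDegree_sub_C_le _ _).trans (totalDegree_X i).le
    _ = α i := mul_one _

open MvPolynomial in
lemma exists_mvPolynomial_eq_taylorPoly {n : ℕ} (N : ℕ) (k : Euc n → Euc n → ℝ)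
    (x c : Euc n) :
    ∃ P : MvPolynomial (Fin n) ℝ, P.totalDegree ≤ N ∧
      ∀ y : Euc n, taylorPoly N k x c y = eval (fun i => y i) P := by
  refine ⟨∑ α : Fin n → Fin (N + 1), if (∑ i, (α i : ℕ)) ≤ N then
      (∏ i, (X i - C (c i)) ^ (α i : ℕ)) * C ((∏ i, ((α i : ℕ).factorial : ℝ))⁻¹ *
        pderivList (idxList fun i => (α i : ℕ)) (k x) c) else 0, ?_, fun y => ?_⟩
  · refine (totalDegree_finsetSum _ _).trans (Finset.sup_le fun α _ => ?_)
    split_ifs with hα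
    · calc _ ≤ _ := totalDegree_mul _ _
        _ ≤ (∑ i, (α i : ℕ)) + 0 :=
          add_le_add (totalDegree_prod_X_sub_C_pow_le _ _) (totalDegree_C _).le
        _ ≤ N := hα
    · simp
  · simp [taylorPoly, apply_ite]

namespace IsHpAtom

variable {n : ℕ} {p : ℝ} {a : Euc n → ℝ} {c : Euc n} {r : ℝ}

lemma ae_enorm_le (ha : IsHpAtom p a c r) :
    ∀ᵐ y ∂(volume : Measure (Euc n)), ‖a y‖ₑ ≤ (volume (cube c r))⁻¹ ^ p⁻¹ := by
  obtain ⟨hr, -, -, hbd, -⟩ := ha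
  have hvol : (0 : ℝ) < (2 * r) ^ n := by positivity
  filter_upwards [hbd] with y hy
  rw [volume_cube c hr.le, ← ofReal_norm, Real.norm_eq_abs, ← ENNReal.ofReal_inv_of_pos hvol,
    ENNReal.ofReal_rpow_of_pos (inv_pos.2 hvol), Real.inv_rpow hvol.le, ← one_div p]
  exact ENNReal.ofReal_le_ofReal hy

lemma integrable_mul (ha : IsHpAtom p a c r) {f : Euc n → ℝ} (hf : Continuous f) :
    Integrable (fun y => f y * a y) := by
  obtain ⟨-, hma, hsupp, hbd, -⟩ := ha
  rw [← integrableOn_iff_integrable_of_support_subset fun y hy => by_contra fun hyc =>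
    hy (by rw [hsupp y hyc, mul_zero])]
  exact (hf.continuousOn.integrableOn_compact (isCompact_cube c r)).mul_bdd
    hma.aestronglyMeasurable (ae_restrict_of_ae hbd)

lemma integral_eval_mul_eq_zero (ha : IsHpAtom p a c r) {P : MvPolynomial (Fin n) ℝ}
    (hP : P.totalDegree ≤ ⌊(n : ℝ) * (1 / p - 1)⌋₊) :
    ∫ y, MvPolynomial.eval (fun i => y i) P * a y = 0 := by
  have hmonomial : ∀ m : Fin n →₀ ℕ, ∀ y : Euc n,
      MvPolynomial.eval (fun i => y i) (MvPolynomial.monomial m (P.coeff m)) * a y =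
        P.coeff m * ((∏ i, y i ^ m i) * a y) := fun m y => by
    rw [MvPolynomial.eval_monomial, Finsupp.prod_fintype _ _ fun _ => pow_zero _, mul_assoc]
  conv_lhs => rw [P.as_sum]
  simp only [map_sum, Finset.sum_mul, hmonomial]
  rw [integral_finsetSum _ fun m _ => (ha.integrable_mul (by fun_prop)).const_mul _]
  refine Finset.sum_eq_zero fun m hm => ?_
  rw [integral_const_mul, ha.2.2.2.2 m ?_, mul_zero]
  simpa [Finsupp.sum_fintype] using (MvPolynomial.le_totalDegree hm).trans hP

lemma setIntegral_sub_taylorPoly_mul (ha : IsHpAtom p a c r) {k : Euc n → Euc n → ℝ}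
    {x : Euc n} (hint : IntegrableOn (fun y => k x y * a y) (cube c r)) :
    ∫ y in cube c r, (k x y - taylorPoly ⌊(n : ℝ) * (1 / p - 1)⌋₊ k x c y) * a y =
      ∫ y in cube c r, k x y * a y := by
  obtain ⟨P, hP, hTaylor⟩ := exists_mvPolynomial_eq_taylorPoly
    ⌊(n : ℝ) * (1 / p - 1)⌋₊ k x c
  have hPa : Integrable fun y => MvPolynomial.eval (fun i => y i) P * a y :=
    ha.integrable_mul ((MvPolynomial.continuous_eval P).comp (PiLp.continuous_ofLp 2 _))
  have hzero : ∫ y in cube c r, MvPolynomial.eval (fun i => y i) P * a y = 0 := by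
    rw [setIntegral_eq_integral_of_forall_compl_eq_zero fun y hy => by
      rw [ha.2.2.1 y hy, mul_zero]]
    exact ha.integral_eval_mul_eq_zero hP
  simp only [hTaylor, sub_mul]
  rw [integral_sub hint hPa.integrableOn, hzero, sub_zero]

lemma ofReal_abs_setIntegral_mul_rpow_le (ha : IsHpAtom p a c r) (hp : 0 < p)
    (g : Euc n → ℝ) :
    ENNReal.ofReal (|∫ y in cube c r, g y * a y| ^ p) ≤
      (volume (cube c r))⁻¹ * (∫⁻ y in cube c r, ENNReal.ofReal |g y|) ^ p := by
  set V := volume (cube c r)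
  have hnorm : ‖∫ y in cube c r, g y * a y‖ₑ ≤
      (∫⁻ y in cube c r, ENNReal.ofReal |g y|) * V⁻¹ ^ p⁻¹ :=
    calc ‖∫ y in cube c r, g y * a y‖ₑ ≤ ∫⁻ y in cube c r, ‖g y * a y‖ₑ :=
          enorm_integral_le_lintegral_enorm _
      _ ≤ ∫⁻ y in cube c r, ENNReal.ofReal |g y| * V⁻¹ ^ p⁻¹ := by
          refine lintegral_mono_ae ?_
          filter_upwards [ae_restrict_of_ae ha.ae_enorm_le] with y hy
          rw [enorm_mul, Real.enorm_eq_ofReal_abs]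
          gcongr
      _ = (∫⁻ y in cube c r, ENNReal.ofReal |g y|) * V⁻¹ ^ p⁻¹ :=
          lintegral_mul_const' _ _ (ENNReal.rpow_ne_top_of_nonneg (by positivity)
            (ENNReal.inv_ne_top.2 (volume_cube_ne_zero c ha.1)))
  calc ENNReal.ofReal (|∫ y in cube c r, g y * a y| ^ p)
      = ‖∫ y in cube c r, g y * a y‖ₑ ^ p := by
        rw [← ENNReal.ofReal_rpow_of_nonneg (abs_nonneg _) hp.le, Real.enorm_eq_ofReal_abs]
    _ ≤ ((∫⁻ y in cube c r, ENNReal.ofReal |g y|) * V⁻¹ ^ p⁻¹) ^ p :=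
        ENNReal.rpow_le_rpow hnorm hp.le
    _ = V⁻¹ * (∫⁻ y in cube c r, ENNReal.ofReal |g y|) ^ p := by
        rw [ENNReal.mul_rpow_of_nonneg _ _ hp.le, ENNReal.rpow_inv_rpow hp.ne', mul_comm]

end IsHpAtom

theorem stmt6_general (n : ℕ) (p : ℝ) (hp0 : 0 < p)
    (k : Euc n → Euc n → ℝ)
    (a : Euc n → ℝ) (yI : Euc n) (ρ : ℝ) (ha : IsHpAtom p a yI ρ)
    (δ : ℝ)
    (Ta : Euc n → ℝ)
    (hTa : ∀ᵐ x ∂(volume : Measure (Euc n)), x ∉ cube yI ((2/δ) * ρ) →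
      IntegrableOn (fun y => k x y * a y) (cube yI ρ) volume ∧
        Ta x = ∫ y in cube yI ρ, k x y * a y) :
    ∫⁻ x in (cube yI ((2/δ) * ρ))ᶜ, ENNReal.ofReal (|Ta x| ^ p) ≤
      omegaP ⌊(n : ℝ) * (1/p - 1)⌋₊ p k δ := by
  set V := volume (cube yI ρ)
  set J := fun x => ∫⁻ y in cube yI ρ,
    ENNReal.ofReal |k x y - taylorPoly ⌊(n : ℝ) * (1/p - 1)⌋₊ k x yI y|
  have hpointwise : ∀ᵐ x ∂volume.restrict (cube yI ((2/δ) * ρ))ᶜ,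
      ENNReal.ofReal (|Ta x| ^ p) ≤ V⁻¹ * J x ^ p := by
    filter_upwards [ae_restrict_of_ae hTa,
      ae_restrict_mem (measurableSet_cube yI ((2/δ) * ρ)).compl] with x hTx hx
    obtain ⟨hint, hTax⟩ := hTx hx
    rw [hTax, ← ha.setIntegral_sub_taylorPoly_mul hint]
    exact ha.ofReal_abs_setIntegral_mul_rpow_le hp0 _
  calc ∫⁻ x in (cube yI ((2/δ) * ρ))ᶜ, ENNReal.ofReal (|Ta x| ^ p)
      ≤ ∫⁻ x in (cube yI ((2/δ) * ρ))ᶜ, V⁻¹ * J x ^ p := lintegral_mono_ae hpointwise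
    _ = V⁻¹ * ∫⁻ x in (cube yI ((2/δ) * ρ))ᶜ, J x ^ p :=
        lintegral_const_mul' _ _ (ENNReal.inv_ne_top.2 (volume_cube_ne_zero yI ha.1))
    _ ≤ omegaP ⌊(n : ℝ) * (1/p - 1)⌋₊ p k δ :=
        le_iSup₂_of_le yI ρ (le_iSup_of_le ha.1 le_rfl)

/-- The basic estimate `∫_{ℝⁿ∖(2/δ)I} |Ta|^p ≤ ω_p(δ)` for an `H^p` atom `a`. -/
theorem stmt6 (n : ℕ) (hn : 1 ≤ n) (p : ℝ) (hp0 : 0 < p) (hp1 : p ≤ 1)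
    (k : Euc n → Euc n → ℝ)
    (hk : ∀ (x : Euc n) (L : List (Fin n)), L.length < ⌊(n : ℝ) * (1/p - 1)⌋₊ →
      Differentiable ℝ (pderivList L (k x)))
    (a : Euc n → ℝ) (yI : Euc n) (ρ : ℝ) (ha : IsHpAtom p a yI ρ)
    (δ : ℝ) (hδ0 : 0 < δ) (hδ1 : δ ≤ 1)
    (Ta : Euc n → ℝ)
    (hTa : ∀ᵐ x ∂(volume : Measure (Euc n)), x ∉ cube yI ((2/δ) * ρ) →
      IntegrableOn (fun y => k x y * a y) (cube yI ρ) volume ∧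
        Ta x = ∫ y in cube yI ρ, k x y * a y) :
    ∫⁻ x in (cube yI ((2/δ) * ρ))ᶜ, ENNReal.ofReal (|Ta x| ^ p) ≤
      omegaP ⌊(n : ℝ) * (1/p - 1)⌋₊ p k δ :=
  stmt6_general n p hp0 k a yI ρ ha δ Ta hTa

end
end
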